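/- If U ≤ O_K^{*,+} is an admissible subgroup, then there exist ℝ-linear maps ψ_1,…,ψ_t : ℝ^s → ℂ such that for every a ∈ U and every 1 ≤ k ≤ t one has σ_{s+k}(a) = exp(ψ_k(log σ_1(a), …, log σ_s(a))). -/

import Mathlib

open NumberField

noncomputable section

/-- The value of an embedding `φ : K → ℂ` at a unit `u` of the ring of integers `𝓞 K`. -/
def unitVal {K : Type} [Field K] (φ : K →+* ℂ) (u : (𝓞 K)ˣ) : ℂ :=
  φ (algebraMap (𝓞 K) K (u : 𝓞 K))

/-- `u ∈ O_K^{*,+}`: `u` is a totally positive unit, i.e. all the real embeddings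
`σ_1, …, σ_s` (encoded as the `Sum.inl` components of `σ`) take positive values at `u`. -/
def IsTotPos {K : Type} [Field K] {s t : ℕ}
    (σ : Fin s ⊕ (Fin t ⊕ Fin t) → (K →+* ℂ)) (u : (𝓞 K)ˣ) : Prop :=
  ∀ i : Fin s, 0 < (unitVal (σ (Sum.inl i)) u).re

/-- The logarithmic map `l : O_K^{*,+} → ℝ^{s+t}`,
`l(a) = (log σ_1(a), …, log σ_s(a), 2 log|σ_{s+1}(a)|, …, 2 log|σ_{s+t}(a)|)`,
with `ℝ^{s+t}` realized as `(Fin s ⊕ Fin t) → ℝ`. -/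
def logMapOT {K : Type} [Field K] {s t : ℕ}
    (σ : Fin s ⊕ (Fin t ⊕ Fin t) → (K →+* ℂ)) (u : (𝓞 K)ˣ) :
    (Fin s ⊕ Fin t) → ℝ :=
  Sum.elim
    (fun i => Real.log (unitVal (σ (Sum.inl i)) u).re)
    (fun k => 2 * Real.log ‖unitVal (σ (Sum.inr (Sum.inl k))) u‖)

/-- The composite `p ∘ l : O_K^{*,+} → ℝ^s`, where `p : ℝ^{s+t} → ℝ^s` is the projection
onto the first `s` coordinates. -/
def plMapOT {K : Type} [Field K] {s t : ℕ}
    (σ : Fin s ⊕ (Fin t ⊕ Fin t) → (K →+* ℂ)) (u : (𝓞 K)ˣ) :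
    Fin s → ℝ :=
  fun i => logMapOT σ u (Sum.inl i)

namespace AuxAdm

set_option linter.unusedSectionVars false

variable {K : Type} [Field K] [NumberField K] {s t : ℕ}

/-- `unitVal φ` as a monoid hom into `ℂ`. -/
def uhom (φ : K →+* ℂ) : (𝓞 K)ˣ →* ℂ :=
  (Units.coeHom ℂ).comp (Units.map (φ.comp (algebraMap (𝓞 K) K)).toMonoidHom)

lemma unitVal_eq_uhom (φ : K →+* ℂ) (u : (𝓞 K)ˣ) : unitVal φ u = uhom φ u := rfl

lemma unitVal_ne_zero (φ : K →+* ℂ) (u : (𝓞 K)ˣ) : unitVal φ u ≠ 0 := by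
  rw [unitVal_eq_uhom]; exact Units.ne_zero _

lemma unitVal_mul (φ : K →+* ℂ) (u v : (𝓞 K)ˣ) :
    unitVal φ (u * v) = unitVal φ u * unitVal φ v := by
  simp [unitVal_eq_uhom, map_mul]

lemma unitVal_one (φ : K →+* ℂ) : unitVal φ (1 : (𝓞 K)ˣ) = 1 := by
  simp [unitVal_eq_uhom, map_one]

lemma unitVal_zpow (φ : K →+* ℂ) (u : (𝓞 K)ˣ) (n : ℤ) :
    unitVal φ (u ^ n) = (unitVal φ u) ^ n := by
  simp [unitVal_eq_uhom, map_zpow]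

lemma unitVal_prod {ι : Type*} (φ : K →+* ℂ) (T : Finset ι) (f : ι → (𝓞 K)ˣ) :
    unitVal φ (∏ i ∈ T, f i) = ∏ i ∈ T, unitVal φ (f i) := by
  simp [unitVal_eq_uhom, map_prod]

variable (σ : Fin s ⊕ (Fin t ⊕ Fin t) → (K →+* ℂ))
variable (hσre : ∀ (i : Fin s) (x : K), ((σ (Sum.inl i)) x).im = 0)

include hσre

lemma re_im_zero (i : Fin s) (u : (𝓞 K)ˣ) : (unitVal (σ (Sum.inl i)) u).im = 0 :=
  hσre i _

lemma re_eq (i : Fin s) (u : (𝓞 K)ˣ) :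
    unitVal (σ (Sum.inl i)) u = ((unitVal (σ (Sum.inl i)) u).re : ℂ) := by
  exact Complex.ext rfl (by simp [re_im_zero σ hσre])

lemma re_ne_zero (i : Fin s) (u : (𝓞 K)ˣ) : (unitVal (σ (Sum.inl i)) u).re ≠ 0 := by
  intro h
  exact unitVal_ne_zero (σ (Sum.inl i)) u (by rw [re_eq σ hσre i u, h]; simp)

lemma pl_mul (u v : (𝓞 K)ˣ) :
    plMapOT σ (u * v) = plMapOT σ u + plMapOT σ v := by
  funext i
  have h := unitVal_mul (σ (Sum.inl i)) u v
  simp only [plMapOT, logMapOT, Sum.elim_inl, Pi.add_apply]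
  rw [h, Complex.mul_re, re_im_zero σ hσre, re_im_zero σ hσre, mul_zero, sub_zero,
    Real.log_mul (re_ne_zero σ hσre i u) (re_ne_zero σ hσre i v)]

lemma pl_one : plMapOT σ (1 : (𝓞 K)ˣ) = 0 := by
  funext i
  simp [plMapOT, logMapOT, unitVal_one]

lemma pl_zpow (u : (𝓞 K)ˣ) (n : ℤ) :
    plMapOT σ (u ^ n) = n • plMapOT σ u := by
  funext i
  simp only [plMapOT, logMapOT, Sum.elim_inl, Pi.smul_apply, zsmul_eq_mul]
  rw [unitVal_zpow, re_eq σ hσre i u, ← Complex.ofReal_zpow, Complex.ofReal_re,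
    Complex.ofReal_re, Real.log_zpow]

lemma pl_prod {ι : Type*} (T : Finset ι) (f : ι → (𝓞 K)ˣ) :
    plMapOT σ (∏ i ∈ T, f i) = ∑ i ∈ T, plMapOT σ (f i) := by
  classical
  induction T using Finset.induction_on with
  | empty => simp [pl_one σ hσre]
  | insert _ _ h ih => rw [Finset.prod_insert h, Finset.sum_insert h, pl_mul σ hσre, ih]

lemma pl_injOn (s1 : 1 ≤ s) (U : Subgroup (𝓞 K)ˣ) (hUpos : ∀ u ∈ U, IsTotPos σ u)
    {u v : (𝓞 K)ˣ} (hu : u ∈ U) (hv : v ∈ U) (h : plMapOT σ u = plMapOT σ v) : u = v := by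
  set i : Fin s := ⟨0, s1⟩
  have h1 : Real.log (unitVal (σ (Sum.inl i)) u).re
      = Real.log (unitVal (σ (Sum.inl i)) v).re := congrFun h i
  have h2 : (unitVal (σ (Sum.inl i)) u).re = (unitVal (σ (Sum.inl i)) v).re := by
    have := congrArg Real.exp h1
    rwa [Real.exp_log (hUpos u hu i), Real.exp_log (hUpos v hv i)] at this
  have h3 : unitVal (σ (Sum.inl i)) u = unitVal (σ (Sum.inl i)) v := by
    rw [re_eq σ hσre i u, re_eq σ hσre i v, h2]
  have h4 : algebraMap (𝓞 K) K (u : 𝓞 K) = algebraMap (𝓞 K) K (v : 𝓞 K) :=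
    (σ (Sum.inl i)).injective h3
  exact Units.ext (RingOfIntegers.coe_injective h4)

end AuxAdm

/-- if `U ≤ O_K^{*,+}` is an admissible subgroup, then there exist `ℝ`-linear
maps `ψ_1, …, ψ_t : ℝ^s → ℂ` such that for every `a ∈ U` and every `1 ≤ k ≤ t` one has
`σ_{s+k}(a) = exp(ψ_k(log σ_1(a), …, log σ_s(a)))`. -/
theorem admissible_subgroup_complex_embeddings_are_exponentials_of_linear_maps
    (K : Type) [Field K] [NumberField K] (s t : ℕ) (hs : 1 ≤ s) (ht : 1 ≤ t)
    (σ : Fin s ⊕ (Fin t ⊕ Fin t) → (K →+* ℂ))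
    (hdeg : Module.finrank ℚ K = s + 2 * t)
    (hσbij : Function.Bijective σ)
    (hσre : ∀ (i : Fin s) (x : K), ((σ (Sum.inl i)) x).im = 0)
    (hσnotre : ∀ k : Fin t, ∃ x : K, ((σ (Sum.inr (Sum.inl k))) x).im ≠ 0)
    (hσconj : ∀ k : Fin t,
      σ (Sum.inr (Sum.inr k)) = (starRingEnd ℂ).comp (σ (Sum.inr (Sum.inl k))))
    (U : Subgroup (𝓞 K)ˣ)
    (hUpos : ∀ u ∈ U, IsTotPos σ u)
    (hUdisc : DiscreteTopology ↥(plMapOT σ '' (U : Set (𝓞 K)ˣ)))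
    (hUspan : Submodule.span ℝ (plMapOT σ '' (U : Set (𝓞 K)ˣ)) = ⊤)
    :
    ∃ ψ : Fin t → ((Fin s → ℝ) →ₗ[ℝ] ℂ),
      ∀ u ∈ U, ∀ k : Fin t,
        unitVal (σ (Sum.inr (Sum.inl k))) u = Complex.exp (ψ k (plMapOT σ u)) := by
  classical
  open AuxAdm Module in
  -- the image is an additive subgroup
  set S : Set (Fin s → ℝ) := plMapOT σ '' (U : Set (𝓞 K)ˣ) with hS
  let A : AddSubgroup (Fin s → ℝ) :=
    { carrier := S
      zero_mem' := ⟨1, U.one_mem, pl_one σ hσre⟩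
      add_mem' := by
        rintro x y ⟨u, hu, rfl⟩ ⟨v, hv, rfl⟩
        exact ⟨u * v, U.mul_mem hu hv, pl_mul σ hσre u v⟩
      neg_mem' := by
        rintro x ⟨u, hu, rfl⟩
        refine ⟨u⁻¹, U.inv_mem hu, ?_⟩
        have := pl_zpow σ hσre u (-1)
        simpa using this }
  let L : Submodule ℤ (Fin s → ℝ) := AddSubgroup.toIntSubmodule A
  have hLS : (L : Set (Fin s → ℝ)) = S := rfl
  haveI hdiscL : DiscreteTopology L := hUdisc
  haveI : IsZLattice ℝ L := ⟨by rw [hLS]; exact hUspan⟩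
  haveI := ZLattice.module_finite ℝ L
  haveI := ZLattice.module_free ℝ L
  let b : Basis (Free.ChooseBasisIndex ℤ L) ℤ L := Free.chooseBasis ℤ L
  let B := Basis.ofZLatticeBasis ℝ L b
  -- choose units mapping to the basis vectors
  have hb : ∀ i, ∃ u, u ∈ U ∧ plMapOT σ u = (b i : Fin s → ℝ) := fun i => (b i).2
  choose w hwU hwpl using hb
  refine ⟨fun k => B.constr ℝ (fun i =>
      Complex.log (unitVal (σ (Sum.inr (Sum.inl k))) (w i))), ?_⟩
  intro u hu k
  have hxL : plMapOT σ u ∈ L := ⟨u, hu, rfl⟩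
  set x : L := ⟨plMapOT σ u, hxL⟩ with hxdef
  set c : Free.ChooseBasisIndex ℤ L → ℤ := fun i => b.repr x i with hc
  have hxsum : plMapOT σ u = ∑ i, (c i) • (b i : Fin s → ℝ) := by
    have := b.sum_repr x
    have := congrArg (Subtype.val) this.symm
    exact this.trans (by simp only [Submodule.coe_sum, Submodule.coe_smul]; rfl)
  -- the product of chosen units
  set v : (𝓞 K)ˣ := ∏ i, (w i) ^ (c i) with hv
  have hvU : v ∈ U := Subgroup.prod_mem U (fun i _ => Subgroup.zpow_mem U (hwU i) _)
  have hplv : plMapOT σ v = plMapOT σ u := by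
    rw [hv, pl_prod σ hσre]
    rw [hxsum]
    refine Finset.sum_congr rfl (fun i _ => ?_)
    rw [pl_zpow σ hσre, hwpl]
  have huv : u = v := pl_injOn σ hσre hs U hUpos hu hvU hplv.symm
  have hψx : (B.constr ℝ (fun i =>
      Complex.log (unitVal (σ (Sum.inr (Sum.inl k))) (w i)))) (plMapOT σ u)
      = ∑ i, (c i : ℂ) * Complex.log (unitVal (σ (Sum.inr (Sum.inl k))) (w i)) := by
    rw [hxsum, map_sum]
    refine Finset.sum_congr rfl (fun i _ => ?_)
    rw [← Basis.ofZLatticeBasis_apply ℝ L b, map_zsmul, Basis.constr_basis]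
    simp [zsmul_eq_mul]
  have hmain : unitVal (σ (Sum.inr (Sum.inl k))) v
      = Complex.exp (∑ i, (c i : ℂ) * Complex.log (unitVal (σ (Sum.inr (Sum.inl k))) (w i))) := by
    rw [hv, unitVal_prod, Complex.exp_sum]
    refine Finset.prod_congr rfl (fun i _ => ?_)
    rw [unitVal_zpow, Complex.exp_int_mul, Complex.exp_log (unitVal_ne_zero _ _)]
  show unitVal (σ (Sum.inr (Sum.inl k))) u = Complex.exp ((B.constr ℝ (fun i =>
      Complex.log (unitVal (σ (Sum.inr (Sum.inl k))) (w i)))) (plMapOT σ u))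
  rw [hψx, huv, hmain]
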